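/- For every x ≥ 1, the maximizer t(x) ∈ (0, x) of t ↦ τ(x,t) (i.e., the unique zero in (0,x) of ∂τ/∂t(x,·)) satisfies (x+1)²/(2x+3) ≤ t(x) < x. -/

import Mathlib

/-!
Writing `v = 1 / (1 + t)`, the derivative of `τ(x, ·)` at `t` is `(1 - G(x, v)) / x` with
`G(x, v) = (1 - v)^x (1 + x v + x (x + 1) v²)`, so a critical point `t₀` satisfies
`G(x, v₀) = 1`, and the claimed bound on `t₀` says `v₀ ≤ v_T := (2x + 3) / (x + 2)²`.
Since `∂G/∂v` has the sign of `1 - (x + 2) v`, `G(x, ·)` decreases on `[1 / (x + 2), 1] ∋ v_T`,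
so it suffices that `G(x, v_T) < 1`. As `1 - v_T = ((x + 1) / (x + 2))²`, this compares a
rational function of `x` with `(1 + 1 / (x + 1))^(2 (x + 1))`, and follows by truncating the
binomial series of `(1 + 1 / (x + 1))^(x + 1)` after its quadratic term for `x ≤ 2` and after
its cubic term for `x ≥ 2`.
-/

noncomputable def tau (x t : ℝ) : ℝ := (1/x) * (t - (t + x + 1) * (t/(1+t)) ^ (x+1))

open Finset Set

namespace Ring

variable {R : Type*}

theorem succ_mul_choose_succ [CommRing R] [BinomialRing R] (r : R) (k : ℕ) :
    ((k : R) + 1) * choose r (k + 1) = r * choose (r - 1) k := by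
  simpa [choose_one_right, nsmul_eq_mul] using choose_smul_choose r (Nat.le_add_left 1 k)

variable [Field R] [CharZero R] [BinomialRing R]

theorem choose_two_eq (r : R) : choose r 2 = r * (r - 1) / 2 := by
  have h := succ_mul_choose_succ r 1
  norm_num at h
  linear_combination h / 2

theorem choose_three_eq (r : R) : choose r 3 = r * (r - 1) * (r - 2) / 6 := by
  have h3 := succ_mul_choose_succ r 2
  have h2 := succ_mul_choose_succ (r - 1) 1
  norm_num at h2 h3
  linear_combination h3 / 3 + r / 6 * h2

end Ring

theorem hasDerivAt_sum_choose_mul_pow (n : ℕ) (p u : ℝ) :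
    HasDerivAt (fun u => ∑ k ∈ range (n + 1), Ring.choose p k * u ^ k)
      (p * ∑ k ∈ range n, Ring.choose (p - 1) k * u ^ k) u := by
  refine (HasDerivAt.fun_sum (u := range (n + 1))
    fun k _ => (hasDerivAt_pow k u).const_mul (Ring.choose p k)).congr_deriv ?_
  rw [sum_range_succ', mul_sum]
  simp only [Nat.cast_zero, zero_mul, mul_zero, add_zero, Nat.cast_add, Nat.cast_one,
    Nat.add_sub_cancel]
  refine sum_congr rfl fun k _ => ?_
  linear_combination u ^ k * Ring.succ_mul_choose_succ p k

-- The derivative in `s` of the difference is `p` times the difference for `p - 1` and `n - 1`.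
theorem sum_range_choose_mul_pow_le_rpow (n : ℕ) {p s : ℝ} (hp : n ≤ p) (hs : 0 ≤ s) :
    ∑ k ∈ range (n + 1), Ring.choose p k * s ^ k ≤ (1 + s) ^ p := by
  induction n generalizing p s with
  | zero => simpa [Ring.choose_zero_right] using Real.one_le_rpow (by linarith) (by simpa using hp)
  | succ n ih =>
    set f : ℝ → ℝ := fun u => (1 + u) ^ p - ∑ k ∈ range (n + 2), Ring.choose p k * u ^ k
    have hp0 : 0 ≤ p := le_trans (Nat.cast_nonneg _) hp
    have hf : ∀ u, 0 < u → HasDerivAt f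
        (p * ((1 + u) ^ (p - 1) - ∑ k ∈ range (n + 1), Ring.choose (p - 1) k * u ^ k)) u := by
      intro u hu
      have h1 : HasDerivAt (fun u : ℝ => 1 + u) 1 u := (hasDerivAt_id u).const_add 1
      refine ((h1.rpow_const (p := p) (Or.inl (by positivity))).sub
        (hasDerivAt_sum_choose_mul_pow (n + 1) p u)).congr_deriv ?_
      ring
    have hmono : MonotoneOn f (Ici 0) := by
      refine monotoneOn_of_hasDerivWithinAt_nonneg (convex_Ici 0) ?_
        (fun u hu => (hf u (by simpa using hu)).hasDerivWithinAt) fun u hu => ?_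
      · exact ((continuousOn_const.add continuousOn_id).rpow_const
          fun _ _ => Or.inr hp0).sub (by fun_prop)
      · have hu : 0 < u := by simpa using hu
        have := ih (p := p - 1) (s := u) (by push_cast at hp; linarith) hu.le
        exact mul_nonneg hp0 (by linarith)
    have hf0 : f 0 = 0 := by simp [f, sum_range_succ']
    simpa [hf0, f] using hmono self_mem_Ici hs hs

theorem le_one_add_one_div_rpow_of_one_le {x : ℝ} (hx : 1 ≤ x) :
    (5 * x + 4) / (2 * (x + 1)) ≤ (1 + 1 / (x + 1)) ^ (x + 1) := by
  have h := sum_range_choose_mul_pow_le_rpow 2 (p := x + 1) (s := 1 / (x + 1))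
    (by norm_num; linarith) (by positivity)
  have hx1 : x + 1 ≠ 0 := by linarith
  convert h using 1
  simp only [sum_range_succ, sum_range_zero, Ring.choose_zero_right, Ring.choose_one_right,
    Ring.choose_two_eq]
  field_simp
  ring

theorem le_one_add_one_div_rpow_of_two_le {x : ℝ} (hx : 2 ≤ x) :
    (8 * x ^ 2 + 13 * x + 6) / (3 * (x + 1) ^ 2) ≤ (1 + 1 / (x + 1)) ^ (x + 1) := by
  have h := sum_range_choose_mul_pow_le_rpow 3 (p := x + 1) (s := 1 / (x + 1))
    (by norm_num; linarith) (by positivity)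
  have hx1 : x + 1 ≠ 0 := by linarith
  convert h using 1
  simp only [sum_range_succ, sum_range_zero, Ring.choose_zero_right, Ring.choose_one_right,
    Ring.choose_two_eq, Ring.choose_three_eq]
  field_simp
  ring

noncomputable def tauCriticalFn (x v : ℝ) : ℝ := (1 - v) ^ x * (1 + x * v + x * (x + 1) * v ^ 2)

-- The value of `1 / (1 + t)` at `t = (x + 1) ^ 2 / (2 * x + 3)`.
noncomputable def tauThreshold (x : ℝ) : ℝ := (2 * x + 3) / (x + 2) ^ 2

theorem hasDerivAt_tau (x : ℝ) {t : ℝ} (ht : 0 < t) :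
    HasDerivAt (tau x) (1 / x * (1 - tauCriticalFn x (1 / (1 + t)))) t := by
  have ht1 : 0 < 1 + t := by linarith
  have hu : 0 < t / (1 + t) := by positivity
  have hpow : HasDerivAt (fun t : ℝ => (t / (1 + t)) ^ (x + 1))
      (1 / (1 + t) ^ 2 * (x + 1) * (t / (1 + t)) ^ x) t := by
    have h := ((hasDerivAt_id' t).fun_div ((hasDerivAt_id' t).const_add 1) ht1.ne').rpow_const
      (p := x + 1) (Or.inl hu.ne')
    refine h.congr_deriv ?_
    rw [add_sub_cancel_right]
    field_simp
    ring
  refine ((((hasDerivAt_id' t).sub ((((hasDerivAt_id' t).add_const x).add_const 1).mul hpow))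
    ).const_mul (1 / x)).congr_deriv ?_
  have h1v : 1 - 1 / (1 + t) = t / (1 + t) := by field_simp; ring
  rw [tauCriticalFn, h1v, Real.rpow_add_one hu.ne']
  field_simp
  ring

theorem antitoneOn_tauCriticalFn {x : ℝ} (hx : 0 ≤ x) :
    AntitoneOn (tauCriticalFn x) (Icc (1 / (x + 2)) 1) := by
  have hderiv : ∀ v ∈ Ioo (1 / (x + 2)) 1, HasDerivAt (tauCriticalFn x)
      ((1 - v) ^ (x - 1) * (x * (x + 1) * v * (1 - (x + 2) * v))) v := by
    intro v hv
    have h1v : 0 < 1 - v := by linarith [hv.2]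
    have hf : HasDerivAt (fun v : ℝ => (1 - v) ^ x) (-1 * x * (1 - v) ^ (x - 1)) v := by
      simpa using ((hasDerivAt_id' v).const_sub 1).rpow_const (p := x) (Or.inl h1v.ne')
    have hg : HasDerivAt (fun v : ℝ => 1 + x * v + x * (x + 1) * v ^ 2)
        (x + x * (x + 1) * (2 * v)) v := by
      refine ((((hasDerivAt_id' v).const_mul x).const_add 1).add
        ((hasDerivAt_pow 2 v).const_mul (x * (x + 1)))).congr_deriv ?_
      push_cast
      ring
    refine (hf.mul hg).congr_deriv ?_
    rw [Real.rpow_sub_one h1v.ne']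
    field_simp
    ring
  refine antitoneOn_of_hasDerivWithinAt_nonpos (convex_Icc _ _) ?_
    (fun v hv => (hderiv v (by simpa using hv)).hasDerivWithinAt) fun v hv => ?_
  · exact ((continuousOn_const.sub continuousOn_id).rpow_const fun _ _ => Or.inr hx).mul
      (by fun_prop)
  · obtain ⟨hv, hv1⟩ : 1 / (x + 2) < v ∧ v < 1 := by simpa using hv
    have hx2 : 0 < x + 2 := by linarith
    have hv0 : 0 < v := lt_trans (by positivity) hv
    have hvx : 1 ≤ (x + 2) * v := by rw [div_lt_iff₀' hx2] at hv; linarith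
    exact mul_nonpos_of_nonneg_of_nonpos (Real.rpow_nonneg (by linarith) _)
      (mul_nonpos_of_nonneg_of_nonpos (by positivity) (by linarith))

theorem tauThreshold_poly_mul_lt {x : ℝ} (hx : 1 ≤ x) :
    (1 + x * tauThreshold x + x * (x + 1) * tauThreshold x ^ 2) * (1 + 1 / (x + 1)) ^ 2
      < ((1 + 1 / (x + 1)) ^ (x + 1)) ^ 2 := by
  rw [tauThreshold]
  have hx1 : 0 < x + 1 := by linarith
  have hx2 : 0 < x + 2 := by linarith
  rcases le_total x 2 with h2 | h2
  · refine lt_of_lt_of_le ?_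
      (pow_le_pow_left₀ (by positivity) (le_one_add_one_div_rpow_of_one_le hx) 2)
    have hA : 0 < 12 * x + 16 * x ^ 2 - 3 * x ^ 4 := by
      have hxsq : x ^ 2 ≤ 4 := by nlinarith
      nlinarith [sq_nonneg x]
    field_simp
    nlinarith [mul_pos (mul_pos (pow_pos hx1 2) (pow_pos hx2 2)) hA]
  · refine lt_of_lt_of_le ?_
      (pow_le_pow_left₀ (by positivity) (le_one_add_one_div_rpow_of_two_le h2) 2)
    have hA : 0 < x * (x ^ 5 + 23 * x ^ 4 + 75 * x ^ 3 + 86 * x ^ 2 + 37 * x + 3) :=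
      mul_pos (by linarith) (by positivity)
    field_simp
    nlinarith [mul_pos (mul_pos (pow_pos hx1 2) (pow_pos hx2 2)) hA]

theorem tauCriticalFn_tauThreshold_lt_one {x : ℝ} (hx : 1 ≤ x) :
    tauCriticalFn x (tauThreshold x) < 1 := by
  set r : ℝ := 1 + 1 / (x + 1)
  have hr : 0 < r := by positivity
  have hrpow : 0 < (r ^ (x + 1)) ^ 2 := by positivity
  have h1v : 1 - tauThreshold x = (r ^ 2)⁻¹ := by
    have : x + 1 ≠ 0 := by linarith
    have : x + 2 ≠ 0 := by linarith
    simp only [r, tauThreshold]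
    field_simp
    ring
  have hscale : tauCriticalFn x (tauThreshold x) * (r ^ (x + 1)) ^ 2
      = (1 + x * tauThreshold x + x * (x + 1) * tauThreshold x ^ 2) * r ^ 2 := by
    rw [tauCriticalFn, h1v, Real.inv_rpow (by positivity), ← Real.rpow_pow_comm hr.le,
      Real.rpow_add_one hr.ne']
    field_simp
  rw [← mul_lt_mul_iff_left₀ hrpow, one_mul, hscale]
  exact tauThreshold_poly_mul_lt hx

theorem tauCriticalFn_lt_one {x v : ℝ} (hx : 1 ≤ x) (hv : tauThreshold x ≤ v) (hv1 : v ≤ 1) :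
    tauCriticalFn x v < 1 := by
  have hx2 : 0 < x + 2 := by linarith
  have hT : 1 / (x + 2) ≤ tauThreshold x := by
    rw [tauThreshold, div_le_div_iff₀ hx2 (by positivity)]
    nlinarith
  have hT1 : tauThreshold x ≤ 1 := by
    rw [tauThreshold, div_le_one (by positivity)]
    nlinarith
  exact (antitoneOn_tauCriticalFn (by linarith) ⟨hT, hT1⟩ ⟨hT.trans hv, hv1⟩ hv).trans_lt
    (tauCriticalFn_tauThreshold_lt_one hx)

theorem stmt8 : ∀ x : ℝ, 1 ≤ x → ∀ t₀ : ℝ, t₀ ∈ Set.Ioo 0 x →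
    deriv (fun t => tau x t) t₀ = 0 →
    (x+1)^2/(2*x+3) ≤ t₀ ∧ t₀ < x := by
  intro x hx t₀ ⟨ht₀, ht₀x⟩ hderiv
  refine ⟨?_, ht₀x⟩
  by_contra! hlt
  have hcrit : tauCriticalFn x (1 / (1 + t₀)) = 1 := by
    have h := (hasDerivAt_tau x ht₀).deriv.symm.trans hderiv
    have hx0 : x ≠ 0 := by linarith
    simp only [one_div_mul_eq_div, div_eq_zero_iff, hx0, or_false] at h
    linarith
  have hv : tauThreshold x ≤ 1 / (1 + t₀) := by
    rw [lt_div_iff₀ (by linarith)] at hlt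
    rw [tauThreshold, div_le_div_iff₀ (by positivity) (by linarith)]
    nlinarith
  have hv1 : 1 / (1 + t₀) ≤ 1 := by rw [div_le_one (by linarith)]; linarith
  exact (tauCriticalFn_lt_one hx hv hv1).ne hcrit
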